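/- arXiv:1604.05037 — 2 statements merged into one kernel-verified Lean document; each statement's English description precedes it below -/
import Mathlib

section
/- Let A ∈ ℂ^{M×K}, a ∈ ℂ^M with A₊ = [A, a] of full column rank, and let D ∈ ℂ^{M×K}, d ∈ ℂ^M with D₊ = [D, d]. Define T₊ = D₊ᴴ(I − A₊A₊†)D₊ and T = Dᴴ(I − AA†)D. Then the K-th leading principal submatrix of T₊ satisfies (T₊)_K = T − DᴴUD ⪯ T, where U = (1/(aᴴ(I − AA†)a)) ((I − AA†)a)((I − AA†)a)ᴴ. -/
/-!
Let `P = I - AA†`, the orthogonal projector onto `(range A)ᗮ`, and `v = Pa`, so that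
`aᴴPa = vᴴv` and `U = vvᴴ / vᴴv`. Since `v` is orthogonal to `range A` and
`range A₊ = range A ⊕ ℂv`, the orthogonal projector onto `range A₊` is `AA† + U`.
An orthogonal projector is determined by being Hermitian and fixing its range, so
`A₊A₊† = AA† + U`, i.e. `I - A₊A₊† = P - U`. The leading `K × K` block of `D₊ᴴXD₊` is `DᴴXD`,
so `(T₊)_K = T - DᴴUD`, and `DᴴUD ⪰ 0` because `U` is a nonnegative multiple of `vvᴴ`.
-/

open Matrix ComplexOrder

/-- Moore–Penrose pseudo-inverse of a full-column-rank matrix. -/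
noncomputable def pinv {M K : ℕ} (A : Matrix (Fin M) (Fin K) ℂ) : Matrix (Fin K) (Fin M) ℂ :=
  (Aᴴ * A)⁻¹ * Aᴴ

theorem IsSelfAdjoint.eq_of_mul_eq_of_mul_eq {R : Type*} [Monoid R] [StarMul R] {p q : R}
    (hp : IsSelfAdjoint p) (hq : IsSelfAdjoint q) (hqp : q * p = p) (hpq : p * q = q) :
    p = q :=
  calc p = star (q * p) := by rw [hqp, hp.star_eq]
    _ = p * q := by rw [star_mul, hp.star_eq, hq.star_eq]
    _ = q := hpq

namespace Matrix

variable {l m α : Type*} {K : ℕ}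

/-- The block matrix `[A, a]`. -/
def appendCol (A : Matrix m (Fin K) α) (a : m → α) : Matrix m (Fin (K + 1)) α :=
  of fun i j => Fin.lastCases (a i) (fun k => A i k) j

@[simp]
theorem appendCol_apply_castSucc (A : Matrix m (Fin K) α) (a : m → α) (i : m) (j : Fin K) :
    appendCol A a i j.castSucc = A i j := by
  simp [appendCol]

@[simp]
theorem appendCol_apply_last (A : Matrix m (Fin K) α) (a : m → α) (i : m) :
    appendCol A a i (Fin.last K) = a i := by
  simp [appendCol]

theorem submatrix_appendCol (A : Matrix m (Fin K) α) (a : m → α) :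
    (appendCol A a).submatrix id Fin.castSucc = A := by
  ext i j
  simp

theorem appendCol_inj {A B : Matrix m (Fin K) α} {a b : m → α} :
    appendCol A a = appendCol B b ↔ A = B ∧ a = b := by
  refine ⟨fun h => ⟨?_, ?_⟩, fun ⟨hAB, hab⟩ => hAB ▸ hab ▸ rfl⟩
  · ext i j
    simpa using congrFun (congrFun h i) j.castSucc
  · ext i
    simpa using congrFun (congrFun h i) (Fin.last K)

theorem mul_appendCol [Fintype m] [NonUnitalNonAssocSemiring α] (X : Matrix l m α)
    (A : Matrix m (Fin K) α) (a : m → α) :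
    X * appendCol A a = appendCol (X * A) (X *ᵥ a) := by
  ext i j
  induction j using Fin.lastCases <;> simp [mul_apply, mulVec, dotProduct]

theorem submatrix_conjTranspose_mul_mul {n o p : Type*} [Fintype m] [Fintype n]
    [NonUnitalNonAssocSemiring α] [Star α] (B : Matrix m n α) (X : Matrix m m α)
    (C : Matrix m o α) (f : p → n) (g : l → o) :
    (Bᴴ * X * C).submatrix f g = (B.submatrix id f)ᴴ * X * C.submatrix id g := by
  rw [submatrix_mul _ _ _ id _ Function.bijective_id, submatrix_mul _ _ _ id _
    Function.bijective_id, conjTranspose_submatrix, submatrix_id_id]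

end Matrix

section pinv

variable {M N : ℕ} {B : Matrix (Fin M) (Fin N) ℂ}

theorem pinv_mul_self (hB : IsUnit (Bᴴ * B).det) : pinv B * B = 1 := by
  rw [pinv, Matrix.mul_assoc]
  exact nonsing_inv_mul _ hB

theorem mul_pinv_mul_self (hB : IsUnit (Bᴴ * B).det) : B * pinv B * B = B := by
  rw [Matrix.mul_assoc, pinv_mul_self hB, Matrix.mul_one]

theorem isHermitian_mul_pinv (B : Matrix (Fin M) (Fin N) ℂ) : (B * pinv B).IsHermitian := by
  rw [IsHermitian, pinv, conjTranspose_mul, conjTranspose_mul, conjTranspose_nonsing_inv,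
    conjTranspose_mul, conjTranspose_conjTranspose, Matrix.mul_assoc]

theorem isIdempotentElem_mul_pinv (hB : IsUnit (Bᴴ * B).det) :
    IsIdempotentElem (B * pinv B) := by
  rw [IsIdempotentElem, ← Matrix.mul_assoc, mul_pinv_mul_self hB]

theorem one_sub_mul_pinv_mul_self (hB : IsUnit (Bᴴ * B).det) : (1 - B * pinv B) * B = 0 := by
  rw [Matrix.sub_mul, Matrix.one_mul, mul_pinv_mul_self hB, sub_self]

theorem posSemidef_one_sub_mul_pinv (hB : IsUnit (Bᴴ * B).det) :
    (1 - B * pinv B).PosSemidef := by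
  have hH : (1 - B * pinv B).IsHermitian := isHermitian_one.sub (isHermitian_mul_pinv B)
  have hP : 1 - B * pinv B = (1 - B * pinv B)ᴴ * (1 - B * pinv B) := by
    rw [hH.eq, (isIdempotentElem_mul_pinv hB).one_sub.eq]
  rw [hP]
  exact posSemidef_conjTranspose_mul_self _

theorem mul_pinv_eq_of_isHermitian {Q : Matrix (Fin M) (Fin M) ℂ}
    (hQ : Q.IsHermitian) (hQB : Q * B = B) (hBQ : B * pinv B * Q = Q) : B * pinv B = Q :=
  IsSelfAdjoint.eq_of_mul_eq_of_mul_eq (isHermitian_mul_pinv B) hQ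
    (by rw [← Matrix.mul_assoc, hQB]) hBQ

theorem mul_pinv_appendCol {A : Matrix (Fin M) (Fin N) ℂ} {a : Fin M → ℂ}
    (hA : IsUnit (Aᴴ * A).det) (hAa : IsUnit ((appendCol A a)ᴴ * appendCol A a).det)
    (hc : star a ⬝ᵥ ((1 - A * pinv A) *ᵥ a) ≠ 0) :
    appendCol A a * pinv (appendCol A a) = A * pinv A +
      (star a ⬝ᵥ ((1 - A * pinv A) *ᵥ a))⁻¹ •
        vecMulVec ((1 - A * pinv A) *ᵥ a) (star ((1 - A * pinv A) *ᵥ a)) := by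
  set P := 1 - A * pinv A
  set v := P *ᵥ a with hv
  set c := star a ⬝ᵥ v
  have hPH : P.IsHermitian := isHermitian_one.sub (isHermitian_mul_pinv A)
  have hstar_v : star v = star a ᵥ* P := by rw [hv, star_mulVec, hPH.eq]
  have hvA : star v ᵥ* A = 0 := by
    rw [hstar_v, vecMul_vecMul, one_sub_mul_pinv_mul_self hA, vecMul_zero]
  have hva : star v ⬝ᵥ a = c := by rw [hstar_v, ← dotProduct_mulVec]
  have hc_star : star c = c := (star_dotProduct v a).symm.trans hva
  have hv_eq : v = a - (A * pinv A) *ᵥ a := by rw [hv, sub_mulVec, one_mulVec]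
  set U := c⁻¹ • vecMulVec v (star v)
  have hUH : U.IsHermitian := by
    rw [IsHermitian, conjTranspose_smul, conjTranspose_vecMulVec, star_star, star_inv₀, hc_star]
  have hUA : U * A = 0 := by
    rw [smul_mul, vecMulVec_mul, hvA]
    ext
    simp [vecMulVec_apply]
  have hUa : U *ᵥ a = v := by
    rw [smul_mulVec, vecMulVec_mulVec, hva, op_smul_eq_smul, smul_smul, inv_mul_cancel₀ hc,
      one_smul]
  obtain ⟨hRA, hRa⟩ : appendCol A a * pinv (appendCol A a) * A = A ∧
      (appendCol A a * pinv (appendCol A a)) *ᵥ a = a := by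
    rw [← appendCol_inj, ← mul_appendCol]
    exact mul_pinv_mul_self hAa
  have hRv : (appendCol A a * pinv (appendCol A a)) *ᵥ v = v := by
    rw [hv_eq, mulVec_sub, hRa, mulVec_mulVec, ← Matrix.mul_assoc, hRA]
  refine mul_pinv_eq_of_isHermitian ((isHermitian_mul_pinv A).add hUH) ?_ ?_
  · rw [mul_appendCol, Matrix.add_mul, add_mulVec, hUA, hUa, mul_pinv_mul_self hA, add_zero,
      hv_eq, add_sub_cancel]
  · rw [Matrix.mul_add, ← Matrix.mul_assoc, hRA, Matrix.mul_smul, mul_vecMulVec, hRv]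

end pinv

/-- With `A₊ = [A, a]` of full column rank and `D₊ = [D, d]`, setting
`T₊ = D₊ᴴ(I − A₊A₊†)D₊` and `T = Dᴴ(I − AA†)D`, the `K`-th leading principal submatrix of
`T₊` equals `T − DᴴUD` and satisfies `(T₊)_K ⪯ T`, where
`U = ((I − AA†)a)((I − AA†)a)ᴴ / (aᴴ(I − AA†)a)`. -/
theorem stmt3 (M K : ℕ) (A D : Matrix (Fin M) (Fin K) ℂ) (a d : Fin M → ℂ)
    (Ap Dp : Matrix (Fin M) (Fin (K + 1)) ℂ)
    (hAp : Ap = Matrix.of fun i j => Fin.lastCases (a i) (fun k => A i k) j)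
    (hDp : Dp = Matrix.of fun i j => Fin.lastCases (d i) (fun k => D i k) j)
    (hA : IsUnit (Aᴴ * A).det) (hApr : IsUnit (Apᴴ * Ap).det)
    (hden : star a ⬝ᵥ ((1 - A * pinv A) *ᵥ a) ≠ 0)
    (U : Matrix (Fin M) (Fin M) ℂ)
    (hU : U = (star a ⬝ᵥ ((1 - A * pinv A) *ᵥ a))⁻¹ •
        Matrix.vecMulVec ((1 - A * pinv A) *ᵥ a) (star ((1 - A * pinv A) *ᵥ a)))
    (Tp : Matrix (Fin (K + 1)) (Fin (K + 1)) ℂ) (T : Matrix (Fin K) (Fin K) ℂ)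
    (hTp : Tp = Dpᴴ * (1 - Ap * pinv Ap) * Dp)
    (hT : T = Dᴴ * (1 - A * pinv A) * D) :
    Tp.submatrix Fin.castSucc Fin.castSucc = T - Dᴴ * U * D ∧
      (T - Tp.submatrix Fin.castSucc Fin.castSucc).PosSemidef := by
  change Ap = appendCol A a at hAp
  change Dp = appendCol D d at hDp
  subst hAp hDp
  have hU_psd : U.PosSemidef := by
    rw [hU]
    exact (posSemidef_vecMulVec_self_star _).smul
      (inv_nonneg_of_nonneg ((posSemidef_one_sub_mul_pinv hA).dotProduct_mulVec_nonneg a))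
  have hblock : Tp.submatrix Fin.castSucc Fin.castSucc = T - Dᴴ * U * D := by
    rw [hTp, hT, submatrix_conjTranspose_mul_mul, submatrix_appendCol,
      mul_pinv_appendCol hA hApr hden, ← hU, ← sub_sub, Matrix.mul_sub, Matrix.sub_mul]
  refine ⟨hblock, ?_⟩
  rw [hblock, sub_sub_cancel]
  exact hU_psd.conjTranspose_mul_mul_same D
end

section
/- Let T₊ ⪰ 0 and R₊ ⪰ 0 be Hermitian (K+1)×(K+1) matrices, and suppose Re(T₊ ⊙ R₊) is invertible with its K-th leading principal submatrix Re((T₊)_K ⊙ (R₊)_K) also invertible. If (T₊)_K ⪯ T for some Hermitian K×K matrix T with Re(T ⊙ (R₊)_K) ≻ 0, then ((Re(T₊ ⊙ R₊))⁻¹)_K ⪰ (Re(T ⊙ (R₊)_K))⁻¹. -/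
/-!
By Schur's product theorem `A = Re(T₊ ⊙ R₊)` is positive semidefinite, hence positive definite
as it is invertible, and `(T₊)_K ⪯ T` gives `A_K ⪯ Re(T ⊙ (R₊)_K)`. Both remaining steps,
`(A⁻¹)_K ⪰ (A_K)⁻¹` and antitonicity of inversion, come from the variational formula
`x ⬝ A⁻¹ x = max_y (2 y ⬝ x - y ⬝ A y)`: restricting `y` to a subspace, or enlarging `A`,
can only decrease the maximum.
-/

open Matrix ComplexOrder
open scoped MatrixOrder

namespace Matrix

variable {m n : Type*} [Fintype m] [Fintype n]

lemma PosSemidef.map_re {S : Matrix n n ℂ} (hS : S.PosSemidef) :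
    (S.map Complex.re).PosSemidef := by
  refine .of_dotProduct_mulVec_nonneg ?_ fun x ↦ ?_
  · ext i j
    simp [← hS.isHermitian.apply i j]
  · have key : star x ⬝ᵥ S.map Complex.re *ᵥ x
        = RCLike.re (star (fun i ↦ (x i : ℂ)) ⬝ᵥ S *ᵥ fun i ↦ (x i : ℂ)) := by
      simp [dotProduct, mulVec, Finset.mul_sum]
    exact key ▸ hS.re_dotProduct_nonneg _

lemma map_re_hadamard_le_map_re_hadamard {X Y R : Matrix n n ℂ} (hR : R.PosSemidef)
    (h : X ≤ Y) : (X ⊙ R).map Complex.re ≤ (Y ⊙ R).map Complex.re := by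
  have hsub :
      (Y ⊙ R).map Complex.re - (X ⊙ R).map Complex.re = ((Y - X) ⊙ R).map Complex.re := by
    ext i j
    simp [sub_mul]
  rw [Matrix.le_iff, hsub]
  exact (h.hadamard hR).map_re

lemma le_of_forall_dotProduct_mulVec_le {X Y : Matrix n n ℝ} (hX : X.IsHermitian)
    (hY : Y.IsHermitian) (h : ∀ x, x ⬝ᵥ X *ᵥ x ≤ x ⬝ᵥ Y *ᵥ x) : X ≤ Y :=
  .of_dotProduct_mulVec_nonneg (hY.sub hX) fun x ↦ by
    simpa [sub_mulVec, dotProduct_sub] using h x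

lemma dotProduct_conjTranspose_mul_mul_mulVec {R : Type*} [CommSemiring R] [StarRing R]
    [TrivialStar R] (P : Matrix n m R) (B : Matrix n n R) (x y : m → R) :
    x ⬝ᵥ (Pᴴ * B * P) *ᵥ y = (P *ᵥ x) ⬝ᵥ B *ᵥ (P *ᵥ y) := by
  rw [conjTranspose_eq_transpose_of_trivial, ← mulVec_mulVec, ← mulVec_mulVec,
    dotProduct_mulVec, vecMul_transpose]

variable [DecidableEq m] [DecidableEq n]

lemma PosDef.isGreatest_two_mul_dotProduct_sub {A : Matrix n n ℝ} (hA : A.PosDef)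
    (x : n → ℝ) :
    IsGreatest (Set.range fun y ↦ 2 * (y ⬝ᵥ x) - y ⬝ᵥ A *ᵥ y) (x ⬝ᵥ A⁻¹ *ᵥ x) := by
  set z := A⁻¹ *ᵥ x
  have hAz : A *ᵥ z = x := by
    rw [mulVec_mulVec, mul_nonsing_inv A ((isUnit_iff_isUnit_det A).mp hA.isUnit),
      one_mulVec]
  have hxz : x ⬝ᵥ z = z ⬝ᵥ x := dotProduct_comm x z
  refine ⟨⟨z, by simp only [hAz, hxz]; ring⟩, ?_⟩
  rintro _ ⟨y, rfl⟩
  have hAT : Aᵀ = A := (conjTranspose_eq_transpose_of_trivial A).symm.trans hA.isHermitian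
  have hzAy : z ⬝ᵥ A *ᵥ y = y ⬝ᵥ x := by
    rw [dotProduct_mulVec, ← mulVec_transpose, hAT, hAz, dotProduct_comm]
  have := hA.posSemidef.dotProduct_mulVec_nonneg (z - y)
  simp only [star_trivial, mulVec_sub, dotProduct_sub, sub_dotProduct, hAz, hzAy] at this
  simp only [hxz]
  linarith

lemma PosDef.inv_le_inv {M N : Matrix n n ℝ} (hN : N.PosDef) (h : N ≤ M) : M⁻¹ ≤ N⁻¹ := by
  have hM : M.PosDef := by simpa using hN.add_posSemidef h
  refine le_of_forall_dotProduct_mulVec_le hM.inv.isHermitian hN.inv.isHermitian fun x ↦ ?_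
  obtain ⟨y, hy⟩ := (hM.isGreatest_two_mul_dotProduct_sub x).1
  have hyNM : y ⬝ᵥ N *ᵥ y ≤ y ⬝ᵥ M *ᵥ y := by
    simpa [sub_mulVec, dotProduct_sub] using h.dotProduct_mulVec_nonneg y
  calc x ⬝ᵥ M⁻¹ *ᵥ x = 2 * (y ⬝ᵥ x) - y ⬝ᵥ M *ᵥ y := hy.symm
    _ ≤ 2 * (y ⬝ᵥ x) - y ⬝ᵥ N *ᵥ y := by linarith
    _ ≤ x ⬝ᵥ N⁻¹ *ᵥ x := (hN.isGreatest_two_mul_dotProduct_sub x).2 ⟨y, rfl⟩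

lemma PosDef.inv_conjTranspose_mul_mul_le {A : Matrix n n ℝ} (hA : A.PosDef)
    {P : Matrix n m ℝ} (hP : Pᴴ * P = 1) : (Pᴴ * A * P)⁻¹ ≤ Pᴴ * A⁻¹ * P := by
  have hPinj : Function.Injective P.mulVec := fun x y hxy ↦ by
    simpa only [mulVec_mulVec, hP, one_mulVec] using congrArg (Pᴴ *ᵥ ·) hxy
  have hPAP := hA.conjTranspose_mul_mul_same hPinj
  refine le_of_forall_dotProduct_mulVec_le hPAP.inv.isHermitian
    (isHermitian_conjTranspose_mul_mul P hA.inv.isHermitian) fun x ↦ ?_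
  obtain ⟨y, hy⟩ := (hPAP.isGreatest_two_mul_dotProduct_sub x).1
  dsimp only at hy
  have hPyPx : (P *ᵥ y) ⬝ᵥ (P *ᵥ x) = y ⬝ᵥ x := by
    simpa only [Matrix.mul_one, hP, one_mulVec] using
      (dotProduct_conjTranspose_mul_mul_mulVec P 1 y x).symm
  rw [← hy, dotProduct_conjTranspose_mul_mul_mulVec, dotProduct_conjTranspose_mul_mul_mulVec,
    ← hPyPx]
  exact (hA.isGreatest_two_mul_dotProduct_sub _).2 ⟨P *ᵥ y, rfl⟩

lemma PosDef.inv_submatrix_le {A : Matrix n n ℝ} (hA : A.PosDef) {e : m → n}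
    (he : Function.Injective e) : (A.submatrix e e)⁻¹ ≤ A⁻¹.submatrix e e := by
  set P : Matrix n m ℝ := (1 : Matrix n n ℝ).submatrix id e
  have hconj (B : Matrix n n ℝ) : Pᴴ * B * P = B.submatrix e e := by
    ext i j
    simp [P, mul_apply, one_apply]
  have hP : Pᴴ * P = 1 := by
    rw [← Matrix.mul_one Pᴴ, hconj, submatrix_one e he]
  simpa only [hconj] using hA.inv_conjTranspose_mul_mul_le hP

end Matrix

theorem stmt5_general (K : ℕ) (Tp Rp : Matrix (Fin (K + 1)) (Fin (K + 1)) ℂ)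
    (hTp : Tp.PosSemidef) (hRp : Rp.PosSemidef)
    (hInv : IsUnit ((Matrix.hadamard Tp Rp).map Complex.re).det)
    (T : Matrix (Fin K) (Fin K) ℂ)
    (hTle : (T - Tp.submatrix Fin.castSucc Fin.castSucc).PosSemidef) :
    ((((Matrix.hadamard Tp Rp).map Complex.re)⁻¹).submatrix Fin.castSucc Fin.castSucc -
      ((Matrix.hadamard T (Rp.submatrix Fin.castSucc Fin.castSucc)).map
        Complex.re)⁻¹).PosSemidef := by
  set A := (Matrix.hadamard Tp Rp).map Complex.re
  have hA : A.PosDef :=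
    (hTp.hadamard hRp).map_re.posDef_iff_isUnit.mpr ((isUnit_iff_isUnit_det A).mpr hInv)
  have hAK : A.submatrix Fin.castSucc Fin.castSucc
      ≤ (Matrix.hadamard T (Rp.submatrix Fin.castSucc Fin.castSucc)).map Complex.re := by
    rw [submatrix_map, submatrix_hadamard]
    exact map_re_hadamard_le_map_re_hadamard (hRp.submatrix Fin.castSucc) hTle
  exact ((hA.submatrix (Fin.castSucc_injective K)).inv_le_inv hAK).trans
    (hA.inv_submatrix_le (Fin.castSucc_injective K))

/-- Let `T₊ ⪰ 0` and `R₊ ⪰ 0` be Hermitian `(K+1)×(K+1)` matrices with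
`Re(T₊ ⊙ R₊)` invertible and `Re((T₊)_K ⊙ (R₊)_K)` invertible. If `(T₊)_K ⪯ T` for a
Hermitian `T` with `Re(T ⊙ (R₊)_K) ≻ 0`, then
`((Re(T₊ ⊙ R₊))⁻¹)_K ⪰ (Re(T ⊙ (R₊)_K))⁻¹`. -/
theorem stmt5 (K : ℕ) (Tp Rp : Matrix (Fin (K + 1)) (Fin (K + 1)) ℂ)
    (hTp : Tp.PosSemidef) (hRp : Rp.PosSemidef)
    (hInv : IsUnit ((Matrix.hadamard Tp Rp).map Complex.re).det)
    (hInvK : IsUnit ((Matrix.hadamard (Tp.submatrix Fin.castSucc Fin.castSucc)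
        (Rp.submatrix Fin.castSucc Fin.castSucc)).map Complex.re).det)
    (T : Matrix (Fin K) (Fin K) ℂ) (hT : T.IsHermitian)
    (hTle : (T - Tp.submatrix Fin.castSucc Fin.castSucc).PosSemidef)
    (hTpos : ((Matrix.hadamard T (Rp.submatrix Fin.castSucc Fin.castSucc)).map
        Complex.re).PosDef) :
    ((((Matrix.hadamard Tp Rp).map Complex.re)⁻¹).submatrix Fin.castSucc Fin.castSucc -
      ((Matrix.hadamard T (Rp.submatrix Fin.castSucc Fin.castSucc)).map
        Complex.re)⁻¹).PosSemidef :=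
  stmt5_general K Tp Rp hTp hRp hInv T hTle
end
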